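/- arXiv:2506.16582 — 6 statements merged into one kernel-verified Lean document; each statement's English description precedes it below -/
import Mathlib

section
/- Let n ≥ 1 and let v_1,…,v_n ∈ [0,1) be stratified, i.e., for every k = 1,…,n the interval [(k−1)/n, k/n) contains exactly one of the points v_1,…,v_n. Let [A,B) ⊆ [0,1) with β = B − A, and let n_* be the number of indices i with v_i ∈ [A,B). Then ⌈nβ⌉ − 2 ≤ n_* ≤ ⌊nβ⌋ + 2. -/
open scoped Classical

/-- A list of points `v 0, …, v (n-1)` in `[0,1)` is *stratified* if each interval
`[k/n, (k+1)/n)`, `k = 0, …, n-1`, contains exactly one of the points. -/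
def Stratified (n : ℕ) (v : Fin n → ℝ) : Prop :=
  ∀ k : Fin n, ∃! i : Fin n, (k : ℝ) / n ≤ v i ∧ v i < ((k : ℝ) + 1) / n

/-!
Stratification pairs the points bijectively with the cells `[k/n, (k+1)/n)`. So the number of
points in `[A, B)` is at least the number of cells contained in `[A, B)`, which is at least
`⌊nB⌋ - ⌈nA⌉`, and at most the number of cells meeting `[A, B)`, which is at most `⌈nB⌉ - ⌊nA⌋`.
Both bounds are within `2` of `n(B - A)` after rounding.
-/

open Finset

section FloorCeil

variable {α : Type*} [CommRing α] [LinearOrder α] [IsStrictOrderedRing α] [FloorRing α]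

lemma Int.ceil_sub_le_floor_sub_ceil_add_two (x y : α) : ⌈x - y⌉ ≤ ⌊x⌋ - ⌈y⌉ + 2 := by
  have h : ((⌈x - y⌉ : ℤ) : α) < ((⌊x⌋ - ⌈y⌉ + 3 : ℤ) : α) := by
    push_cast
    linarith [Int.ceil_lt_add_one (x - y), Int.lt_floor_add_one x, Int.ceil_lt_add_one y]
  have : ⌈x - y⌉ < ⌊x⌋ - ⌈y⌉ + 3 := by exact_mod_cast h
  omega

lemma Int.ceil_sub_floor_le_floor_sub_add_two (x y : α) : ⌈x⌉ - ⌊y⌋ ≤ ⌊x - y⌋ + 2 := by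
  have h : ((⌈x⌉ - ⌊y⌋ : ℤ) : α) < ((⌊x - y⌋ + 3 : ℤ) : α) := by
    push_cast
    linarith [Int.ceil_lt_add_one x, Int.lt_floor_add_one (x - y), Int.lt_floor_add_one y]
  have : ⌈x⌉ - ⌊y⌋ < ⌊x - y⌋ + 3 := by exact_mod_cast h
  omega

end FloorCeil

lemma eq_of_mem_cell_of_mem_cell {n k k' : ℕ} {x : ℝ}
    (h : (k : ℝ) / n ≤ x ∧ x < ((k : ℝ) + 1) / n) (h' : (k' : ℝ) / n ≤ x ∧ x < ((k' : ℝ) + 1) / n) :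
    k = k' := by
  have hn : (0 : ℝ) < n := by
    rcases n.eq_zero_or_pos with rfl | hn
    · simp only [Nat.cast_zero, div_zero] at h
      linarith [h.1, h.2]
    · exact_mod_cast hn
  simp only [div_le_iff₀ hn, lt_div_iff₀ hn] at h h'
  have hlt : (k : ℝ) < k' + 1 := by linarith
  have hgt : (k' : ℝ) < k + 1 := by linarith
  norm_cast at hlt hgt
  omega

theorem Stratified.exists_equiv_mem_cell {n : ℕ} {v : Fin n → ℝ} (h : Stratified n v) :
    ∃ e : Fin n ≃ Fin n, ∀ k : Fin n, (k : ℝ) / n ≤ v (e k) ∧ v (e k) < ((k : ℝ) + 1) / n := by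
  choose g hg using fun k => (h k).exists
  have hinj : g.Injective := fun k k' hkk' =>
    Fin.ext (eq_of_mem_cell_of_mem_cell (hg k) (hkk' ▸ hg k'))
  exact ⟨.ofBijective g (Finite.injective_iff_bijective.mp hinj), hg⟩

lemma card_Ico_le_card_cells_subset {n : ℕ} {A B : ℝ} (hA : 0 ≤ A) (hB : B ≤ 1) :
    #(Ico ⌈n * A⌉ ⌊n * B⌋) ≤ #{k : Fin n | A ≤ (k : ℝ) / n ∧ ((k : ℝ) + 1) / n ≤ B} := by
  rw [← card_map (Fin.valEmbedding.trans (Nat.castEmbedding : ℕ ↪ ℤ))]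
  refine card_le_card fun k hk ↦ ?_
  rw [mem_Ico] at hk
  lift k to ℕ using (Int.ceil_nonneg (by positivity)).trans hk.1
  have hAk : n * A ≤ k := by exact_mod_cast Int.ceil_le.mp hk.1
  have hkB : (k : ℝ) + 1 ≤ n * B := by exact_mod_cast Int.le_floor.mp (Int.add_one_le_of_lt hk.2)
  have hkn : (k : ℝ) + 1 ≤ n := hkB.trans (mul_le_of_le_one_right n.cast_nonneg hB)
  have hn : (0 : ℝ) < n := by linarith [k.cast_nonneg (α := ℝ)]
  refine mem_map.mpr ⟨⟨k, by exact_mod_cast hkn⟩, mem_filter.mpr ⟨mem_univ _, ?_, ?_⟩, rfl⟩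
  · rwa [le_div_iff₀ hn, mul_comm]
  · rwa [div_le_iff₀ hn, mul_comm]

lemma card_cells_meeting_le_card_Ico {n : ℕ} {A B : ℝ} :
    #{k : Fin n | (k : ℝ) / n < B ∧ A < ((k : ℝ) + 1) / n} ≤ #(Ico ⌊n * A⌋ ⌈n * B⌉) := by
  rw [← card_map (Fin.valEmbedding.trans (Nat.castEmbedding : ℕ ↪ ℤ))]
  refine card_le_card fun z hz ↦ ?_
  obtain ⟨k, hk, rfl⟩ := mem_map.mp hz
  have hn : (0 : ℝ) < n := by exact_mod_cast k.pos
  rw [mem_filter, div_lt_iff₀ hn, lt_div_iff₀ hn] at hk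
  have hkB : (k : ℤ) < ⌈n * B⌉ := Int.lt_ceil.mpr (by push_cast; linarith)
  have hAk : ⌊n * A⌋ < (k : ℤ) + 1 := Int.floor_lt.mpr (by push_cast; linarith)
  simp only [Function.Embedding.trans_apply, Fin.valEmbedding_apply, Nat.castEmbedding_apply, mem_Ico]
  omega

theorem stratified_count_interval_general
    (n : ℕ) (v : Fin n → ℝ)
    (hstrat : Stratified n v)
    (A B : ℝ) (hA : 0 ≤ A) (hAB : A ≤ B) (hB : B ≤ 1) :
    let β : ℝ := B - A
    let nstar : ℕ := (Finset.univ.filter (fun i : Fin n => A ≤ v i ∧ v i < B)).card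
    ⌈(n : ℝ) * β⌉ - 2 ≤ (nstar : ℤ) ∧ (nstar : ℤ) ≤ ⌊(n : ℝ) * β⌋ + 2 := by
  intro β nstar
  obtain ⟨e, he⟩ := hstrat.exists_equiv_mem_cell
  have hcount : nstar = #{k | A ≤ v (e k) ∧ v (e k) < B} :=
    card_equiv e.symm (by simp)
  have hlower : #{k : Fin n | A ≤ (k : ℝ) / n ∧ ((k : ℝ) + 1) / n ≤ B} ≤ nstar :=
    hcount ▸ card_le_card (monotone_filter_right _ fun k _ hk ↦
      ⟨hk.1.trans (he k).1, (he k).2.trans_le hk.2⟩)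
  have hupper : nstar ≤ #{k : Fin n | (k : ℝ) / n < B ∧ A < ((k : ℝ) + 1) / n} :=
    hcount ▸ card_le_card (monotone_filter_right _ fun k _ hk ↦
      ⟨(he k).1.trans_lt hk.2, hk.1.trans_lt (he k).2⟩)
  have hnβ : (n : ℝ) * β = n * B - n * A := mul_sub _ _ _
  have hβ : 0 ≤ ⌊(n : ℝ) * β⌋ := Int.floor_nonneg.mpr (by positivity [sub_nonneg.mpr hAB])
  have hcells_in := (card_Ico_le_card_cells_subset (n := n) hA hB).trans hlower
  have hcells_meeting := hupper.trans (card_cells_meeting_le_card_Ico (n := n) (A := A) (B := B))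
  rw [Int.card_Ico] at hcells_in hcells_meeting
  have hceil := Int.ceil_sub_le_floor_sub_ceil_add_two ((n : ℝ) * B) (n * A)
  have hfloor := Int.ceil_sub_floor_le_floor_sub_add_two ((n : ℝ) * B) (n * A)
  rw [← hnβ] at hceil hfloor
  omega

theorem stratified_count_interval
    (n : ℕ) (hn : 1 ≤ n) (v : Fin n → ℝ)
    (hv : ∀ i, 0 ≤ v i ∧ v i < 1)
    (hstrat : Stratified n v)
    (A B : ℝ) (hA : 0 ≤ A) (hAB : A ≤ B) (hB : B ≤ 1) :
    let β : ℝ := B - A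
    let nstar : ℕ := (Finset.univ.filter (fun i : Fin n => A ≤ v i ∧ v i < B)).card
    ⌈(n : ℝ) * β⌉ - 2 ≤ (nstar : ℤ) ∧ (nstar : ℤ) ≤ ⌊(n : ℝ) * β⌋ + 2 :=
  stratified_count_interval_general n v hstrat A B hA hAB hB
end

section
/- Let z_1,…,z_n ∈ [0,1)^{s+1} with z_i = (v_i, u_i), v_i ∈ [0,1), u_i ∈ [0,1)^s, and let D_n^* denote the star discrepancy of z_1,…,z_n in [0,1)^{s+1}. Fix 0 ≤ B_{ℓ−1} < B_ℓ ≤ 1 with β_ℓ = B_ℓ − B_{ℓ−1}, and let n_ℓ = #{i : B_{ℓ−1} ≤ v_i < B_ℓ} > 0. Then for every c ∈ [0,1)^s, the within-stratum local discrepancy satisfies |(1/n_ℓ) Σ_{i=1}^n 1{B_{ℓ−1} ≤ v_i < B_ℓ} · 1{u_i ∈ [0,c)} − vol([0,c))| ≤ |nβ_ℓ/n_ℓ − 1| · vol([0,c)) + (2n/n_ℓ) · D_n^*. -/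
open scoped Classical

/-!
Write `A(b)` for the number of points in `[0,b) × [0,c)` and `δ(b)` for the local discrepancy at
that box, so that `A(b) = n (δ(b) + b vol[0,c))`. The stratum count is `A(B_ℓ) - A(B_{ℓ-1})`, hence
`(1/n_ℓ)(A(B_ℓ) - A(B_{ℓ-1})) - vol = (n/n_ℓ)(δ(B_ℓ) - δ(B_{ℓ-1})) + (nβ_ℓ/n_ℓ - 1) vol`,
and both local discrepancies are bounded by `D_n^*`. The supremum only ranges over `b < 1`; the
case `B_ℓ = 1` follows because `b ↦ δ(b)` is left-continuous.
-/

open Finset Filter Topology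

noncomputable section LocalDiscrepancy

variable {n s : ℕ} (v : Fin n → ℝ) (u : Fin n → Fin s → ℝ)

def anchoredCount (b : ℝ) (c : Fin s → ℝ) : ℝ :=
  ∑ i, (if 0 ≤ v i ∧ v i < b then (1 : ℝ) else 0) *
    (if ∀ j, 0 ≤ u i j ∧ u i j < c j then (1 : ℝ) else 0)

def localDiscrepancy (b : ℝ) (c : Fin s → ℝ) : ℝ :=
  (1 / n) * anchoredCount v u b c - b * ∏ j, c j

def starDiscrepancy : ℝ :=
  sSup { y : ℝ | ∃ b : ℝ, ∃ c' : Fin s → ℝ,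
    (0 ≤ b ∧ b < 1) ∧ (∀ j, 0 ≤ c' j ∧ c' j < 1) ∧ y = |localDiscrepancy v u b c'| }

variable {v u} {a b : ℝ} {c : Fin s → ℝ}

lemma anchoredCount_nonneg : 0 ≤ anchoredCount v u b c :=
  sum_nonneg fun _ _ => mul_nonneg (by split_ifs <;> norm_num) (by split_ifs <;> norm_num)

lemma anchoredCount_le : anchoredCount v u b c ≤ n :=
  calc anchoredCount v u b c ≤ ∑ _i : Fin n, (1 : ℝ) :=
        sum_le_sum fun _ _ => by split_ifs <;> norm_num
    _ = n := by simp

lemma anchoredCount_eq_mul_localDiscrepancy_add :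
    anchoredCount v u b c = n * (localDiscrepancy v u b c + b * ∏ j, c j) := by
  rcases eq_or_ne n 0 with rfl | hn
  · simp [anchoredCount]
  · rw [localDiscrepancy]
    field_simp
    ring

lemma abs_localDiscrepancy_le_one (hb₀ : 0 ≤ b) (hb₁ : b ≤ 1) (hc : ∀ j, 0 ≤ c j ∧ c j ≤ 1) :
    |localDiscrepancy v u b c| ≤ 1 := by
  have hfrac₀ : 0 ≤ (1 / n : ℝ) * anchoredCount v u b c :=
    mul_nonneg (by positivity) anchoredCount_nonneg
  have hfrac₁ : (1 / n : ℝ) * anchoredCount v u b c ≤ 1 := by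
    rw [one_div_mul_eq_div]
    exact div_le_one_of_le₀ anchoredCount_le n.cast_nonneg
  have hvol₀ : 0 ≤ ∏ j, c j := prod_nonneg fun j _ => (hc j).1
  have hvol₁ : ∏ j, c j ≤ 1 := prod_le_one (fun j _ => (hc j).1) fun j _ => (hc j).2
  have hbox₀ : 0 ≤ b * ∏ j, c j := mul_nonneg hb₀ hvol₀
  have hbox₁ : b * ∏ j, c j ≤ 1 := mul_le_one₀ hb₁ hvol₀ hvol₁
  rw [localDiscrepancy, abs_sub_le_iff]
  constructor <;> linarith

lemma bddAbove_abs_localDiscrepancy :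
    BddAbove { y : ℝ | ∃ b : ℝ, ∃ c' : Fin s → ℝ,
      (0 ≤ b ∧ b < 1) ∧ (∀ j, 0 ≤ c' j ∧ c' j < 1) ∧ y = |localDiscrepancy v u b c'| } := by
  refine ⟨1, ?_⟩
  rintro _ ⟨b, c', ⟨hb₀, hb₁⟩, hc', rfl⟩
  exact abs_localDiscrepancy_le_one hb₀ hb₁.le fun j => ⟨(hc' j).1, (hc' j).2.le⟩

lemma anchoredCount_eventually_eq_nhdsLT (b₀ : ℝ) :
    ∀ᶠ b in 𝓝[<] b₀, anchoredCount v u b c = anchoredCount v u b₀ c := by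
  have hlt : ∀ᶠ b in 𝓝[<] b₀, ∀ i, (v i < b ↔ v i < b₀) := by
    refine eventually_all.2 fun i => ?_
    by_cases hi : v i < b₀
    · filter_upwards [nhdsWithin_le_nhds (eventually_gt_nhds hi)] with b hb
      exact iff_of_true hb hi
    · filter_upwards [self_mem_nhdsWithin] with b (hb : b < b₀)
      exact iff_of_false (fun h => hi (h.trans hb)) hi
  filter_upwards [hlt] with b hb
  simp only [anchoredCount, hb]

lemma tendsto_localDiscrepancy_nhdsLT (b₀ : ℝ) :
    Tendsto (fun b => localDiscrepancy v u b c) (𝓝[<] b₀) (𝓝 (localDiscrepancy v u b₀ c)) := by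
  have hcont : Tendsto (fun b => (1 / n : ℝ) * anchoredCount v u b₀ c - b * ∏ j, c j)
      (𝓝[<] b₀) (𝓝 (localDiscrepancy v u b₀ c)) :=
    ((continuous_const.sub (continuous_id.mul continuous_const)).tendsto b₀).mono_left
      nhdsWithin_le_nhds
  refine hcont.congr' ?_
  filter_upwards [anchoredCount_eventually_eq_nhdsLT b₀] with b hb
  rw [localDiscrepancy, hb]

lemma abs_localDiscrepancy_le_starDiscrepancy (hb₀ : 0 ≤ b) (hb₁ : b ≤ 1)
    (hc : ∀ j, 0 ≤ c j ∧ c j < 1) :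
    |localDiscrepancy v u b c| ≤ starDiscrepancy v u := by
  rcases hb₁.lt_or_eq with hb₁ | rfl
  · exact le_csSup bddAbove_abs_localDiscrepancy ⟨b, c, ⟨hb₀, hb₁⟩, hc, rfl⟩
  · refine le_of_tendsto (tendsto_localDiscrepancy_nhdsLT 1).abs ?_
    filter_upwards [Ioo_mem_nhdsLT zero_lt_one] with b hb
    exact le_csSup bddAbove_abs_localDiscrepancy ⟨b, c, ⟨hb.1.le, hb.2⟩, hc, rfl⟩

lemma stratumCount_eq_sub (ha : 0 ≤ a) (hab : a ≤ b) :
    ∑ i, (if a ≤ v i ∧ v i < b then (1 : ℝ) else 0) *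
        (if ∀ j, 0 ≤ u i j ∧ u i j < c j then (1 : ℝ) else 0)
      = anchoredCount v u b c - anchoredCount v u a c := by
  rw [anchoredCount, anchoredCount, ← sum_sub_distrib]
  refine sum_congr rfl fun i _ => ?_
  rw [← sub_mul]
  congr 1
  split_ifs <;> grind

end LocalDiscrepancy

theorem within_stratum_local_discrepancy_bound_general
    (n s : ℕ)
    (v : Fin n → ℝ) (u : Fin n → Fin s → ℝ)
    (Bprev Bcur : ℝ) (hB0 : 0 ≤ Bprev) (hBlt : Bprev < Bcur) (hB1 : Bcur ≤ 1)
    (c : Fin s → ℝ) (hc : ∀ j, 0 ≤ c j ∧ c j < 1) :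
    -- local discrepancy of the full (s+1)-dimensional points at anchored box [0,b)×[0,c')
    let δ : ℝ → (Fin s → ℝ) → ℝ := fun b c' =>
      (1 / n) * ∑ i : Fin n,
          (if 0 ≤ v i ∧ v i < b then (1 : ℝ) else 0) *
          (if ∀ j, 0 ≤ u i j ∧ u i j < c' j then (1 : ℝ) else 0)
        - b * ∏ j, c' j
    -- the star discrepancy of the n points in [0,1)^{s+1}
    let Dstar : ℝ := sSup { y : ℝ | ∃ b : ℝ, ∃ c' : Fin s → ℝ,
        (0 ≤ b ∧ b < 1) ∧ (∀ j, 0 ≤ c' j ∧ c' j < 1) ∧ y = |δ b c'| }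
    let β : ℝ := Bcur - Bprev
    let nℓ : ℕ := (Finset.univ.filter (fun i : Fin n => Bprev ≤ v i ∧ v i < Bcur)).card
    nℓ > 0 →
      |(1 / nℓ) * ∑ i : Fin n,
            (if Bprev ≤ v i ∧ v i < Bcur then (1 : ℝ) else 0) *
            (if ∀ j, 0 ≤ u i j ∧ u i j < c j then (1 : ℝ) else 0)
          - ∏ j, c j|
        ≤ |(n : ℝ) * β / nℓ - 1| * ∏ j, c j + (2 * n / nℓ) * Dstar := by
  intro δ Dstar β nℓ _
  change _ ≤ _ + _ * starDiscrepancy v u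
  set δcur := localDiscrepancy v u Bcur c
  set δprev := localDiscrepancy v u Bprev c
  have hcur : |δcur| ≤ starDiscrepancy v u :=
    abs_localDiscrepancy_le_starDiscrepancy (hB0.trans hBlt.le) hB1 hc
  have hprev : |δprev| ≤ starDiscrepancy v u :=
    abs_localDiscrepancy_le_starDiscrepancy hB0 (hBlt.le.trans hB1) hc
  have hvol : 0 ≤ ∏ j, c j := prod_nonneg fun j _ => (hc j).1
  have hweight : (0 : ℝ) ≤ n / nℓ := by positivity
  rw [stratumCount_eq_sub hB0 hBlt.le, anchoredCount_eq_mul_localDiscrepancy_add,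
    anchoredCount_eq_mul_localDiscrepancy_add]
  calc |(1 / nℓ : ℝ) * (n * (δcur + Bcur * ∏ j, c j) - n * (δprev + Bprev * ∏ j, c j))
          - ∏ j, c j|
      = |(n / nℓ : ℝ) * (δcur - δprev) + (n * β / nℓ - 1) * ∏ j, c j| := by
        congr 1
        simp only [β]
        ring
    _ ≤ (n / nℓ : ℝ) * |δcur - δprev| + |(n : ℝ) * β / nℓ - 1| * ∏ j, c j := by
      grw [abs_add_le, abs_mul, abs_mul, abs_of_nonneg hweight, abs_of_nonneg hvol]
    _ ≤ (n / nℓ : ℝ) * (2 * starDiscrepancy v u) + |(n : ℝ) * β / nℓ - 1| * ∏ j, c j := by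
      grw [abs_sub, hcur, hprev, two_mul]
    _ = |(n : ℝ) * β / nℓ - 1| * ∏ j, c j + (2 * n / nℓ) * starDiscrepancy v u := by ring

theorem within_stratum_local_discrepancy_bound
    (n s : ℕ) (hn : 1 ≤ n)
    (v : Fin n → ℝ) (u : Fin n → Fin s → ℝ)
    (hv : ∀ i, 0 ≤ v i ∧ v i < 1)
    (hu : ∀ i j, 0 ≤ u i j ∧ u i j < 1)
    (Bprev Bcur : ℝ) (hB0 : 0 ≤ Bprev) (hBlt : Bprev < Bcur) (hB1 : Bcur ≤ 1)
    (c : Fin s → ℝ) (hc : ∀ j, 0 ≤ c j ∧ c j < 1) :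
    -- local discrepancy of the full (s+1)-dimensional points at anchored box [0,b)×[0,c')
    let δ : ℝ → (Fin s → ℝ) → ℝ := fun b c' =>
      (1 / n) * ∑ i : Fin n,
          (if 0 ≤ v i ∧ v i < b then (1 : ℝ) else 0) *
          (if ∀ j, 0 ≤ u i j ∧ u i j < c' j then (1 : ℝ) else 0)
        - b * ∏ j, c' j
    -- the star discrepancy of the n points in [0,1)^{s+1}
    let Dstar : ℝ := sSup { y : ℝ | ∃ b : ℝ, ∃ c' : Fin s → ℝ,
        (0 ≤ b ∧ b < 1) ∧ (∀ j, 0 ≤ c' j ∧ c' j < 1) ∧ y = |δ b c'| }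
    let β : ℝ := Bcur - Bprev
    let nℓ : ℕ := (Finset.univ.filter (fun i : Fin n => Bprev ≤ v i ∧ v i < Bcur)).card
    nℓ > 0 →
      |(1 / nℓ) * ∑ i : Fin n,
            (if Bprev ≤ v i ∧ v i < Bcur then (1 : ℝ) else 0) *
            (if ∀ j, 0 ≤ u i j ∧ u i j < c j then (1 : ℝ) else 0)
          - ∏ j, c j|
        ≤ |(n : ℝ) * β / nℓ - 1| * ∏ j, c j + (2 * n / nℓ) * Dstar :=
  within_stratum_local_discrepancy_bound_general n s v u Bprev Bcur hB0 hBlt hB1 c hc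
end

section
/- Let L ≥ 1, α_1,…,α_L > 0, ρ > 0 and n > 0. Among all positive real numbers n_1,…,n_L with Σ_{ℓ=1}^L n_ℓ = n, the criterion C_1 = Σ_{ℓ=1}^L α_ℓ n_ℓ^{−ρ/2} is minimized by n_ℓ^* = n · α_ℓ^{2/(ρ+2)} / Σ_{k=1}^L α_k^{2/(ρ+2)}; that is, for every such (n_1,…,n_L), Σ_{ℓ=1}^L α_ℓ n_ℓ^{−ρ/2} ≥ n^{−ρ/2} · (Σ_{k=1}^L α_k^{2/(ρ+2)})^{(ρ+2)/2}, with equality at n_ℓ = n_ℓ^*. -/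
/-!
Write `p = (ρ + 2) / 2 ≥ 1`, so that `-(ρ / 2) = 1 - p` and `2 / (ρ + 2) = p⁻¹`. The weighted Hölder
inequality with weights `nₗ` applied to `fₗ = αₗ^{1/p} / nₗ` gives
`Σ αₗ^{1/p} ≤ (Σ nₗ)^{1 - 1/p} (Σ αₗ nₗ^{1-p})^{1/p}`, which is the lower bound after raising to
the power `p`. Hölder is an equality when `fₗ^p` is constant, i.e. when `nₗ ∝ αₗ^{1/p}`.
-/

open Real Finset

section Allocation

variable {ι : Type*} [Fintype ι] {p : ℝ} {a : ι → ℝ}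

theorem rpow_sum_rpow_inv_le (hp : 1 ≤ p) (ha : ∀ i, 0 ≤ a i) {x : ι → ℝ} (hx : ∀ i, 0 < x i) :
    (∑ i, a i ^ p⁻¹) ^ p ≤ (∑ i, x i) ^ (p - 1) * ∑ i, a i * x i ^ (1 - p) := by
  have hp0 : p ≠ 0 := (zero_lt_one.trans_le hp).ne'
  have hweight : ∀ i, x i * (a i ^ p⁻¹ * (x i)⁻¹) = a i ^ p⁻¹ := fun i => by
    field_simp [(hx i).ne']
  have hweight_pow : ∀ i, x i * (a i ^ p⁻¹ * (x i)⁻¹) ^ p = a i * x i ^ (1 - p) := fun i => by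
    rw [mul_rpow (rpow_nonneg (ha i) _) (inv_nonneg.2 (hx i).le), ← rpow_mul (ha i),
      inv_mul_cancel₀ hp0, rpow_one, inv_rpow (hx i).le, rpow_sub (hx i), rpow_one]
    ring
  have holder := inner_le_weight_mul_Lp_of_nonneg univ hp x (fun i => a i ^ p⁻¹ * (x i)⁻¹)
    (fun i => (hx i).le) (fun i => by have := ha i; have := hx i; positivity)
  simp only [hweight, hweight_pow] at holder
  have hT : 0 ≤ ∑ i, a i * x i ^ (1 - p) :=
    sum_nonneg fun i _ => by have := ha i; have := hx i; positivity
  have hN : 0 ≤ ∑ i, x i := sum_nonneg fun i _ => (hx i).le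
  calc (∑ i, a i ^ p⁻¹) ^ p
      ≤ ((∑ i, x i) ^ (1 - p⁻¹) * (∑ i, a i * x i ^ (1 - p)) ^ p⁻¹) ^ p := by
        gcongr
        exact sum_nonneg fun i _ => rpow_nonneg (ha i) _
    _ = (∑ i, x i) ^ (p - 1) * ∑ i, a i * x i ^ (1 - p) := by
        rw [mul_rpow (by positivity) (by positivity), ← rpow_mul hN, ← rpow_mul hT,
          inv_mul_cancel₀ hp0, rpow_one, sub_mul, one_mul, inv_mul_cancel₀ hp0]

theorem sum_mul_rpow_one_sub_of_proportional (hp : p ≠ 0) (ha : ∀ i, 0 ≤ a i) {c : ℝ}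
    (hc : 0 ≤ c) :
    ∑ i, a i * (c * a i ^ p⁻¹) ^ (1 - p) = c ^ (1 - p) * ∑ i, a i ^ p⁻¹ := by
  rw [mul_sum]
  refine sum_congr rfl fun i _ => ?_
  have hexp : 1 + p⁻¹ * (1 - p) = p⁻¹ := by field_simp; ring
  rw [mul_rpow hc (rpow_nonneg (ha i) _), ← rpow_mul (ha i), mul_left_comm,
    ← rpow_one_add' (ha i) (by rw [hexp]; exact inv_ne_zero hp), hexp]

end Allocation

theorem optimal_allocation_C1
    (L : ℕ) (hL : 1 ≤ L) (α : Fin L → ℝ) (hα : ∀ ℓ, 0 < α ℓ)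
    (ρ : ℝ) (hρ : 0 < ρ) (n : ℝ) (hn : 0 < n) :
    (∀ ns : Fin L → ℝ, (∀ ℓ, 0 < ns ℓ) → ∑ ℓ, ns ℓ = n →
      ∑ ℓ, α ℓ * (ns ℓ) ^ (-(ρ / 2))
        ≥ n ^ (-(ρ / 2)) * (∑ k, (α k) ^ (2 / (ρ + 2))) ^ ((ρ + 2) / 2)) ∧
    (let nstar : Fin L → ℝ :=
        fun ℓ => n * (α ℓ) ^ (2 / (ρ + 2)) / ∑ k, (α k) ^ (2 / (ρ + 2))
     (∀ ℓ, 0 < nstar ℓ) ∧ (∑ ℓ, nstar ℓ = n) ∧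
      ∑ ℓ, α ℓ * (nstar ℓ) ^ (-(ρ / 2))
        = n ^ (-(ρ / 2)) * (∑ k, (α k) ^ (2 / (ρ + 2))) ^ ((ρ + 2) / 2)) := by
  set p := (ρ + 2) / 2 with hp_def
  have hp : 1 ≤ p := by linarith
  have hp0 : p ≠ 0 := by positivity
  rw [show 2 / (ρ + 2) = p⁻¹ from (inv_div _ _).symm, show -(ρ / 2) = 1 - p by linarith]
  set S := ∑ k, α k ^ p⁻¹
  have hS : 0 < S := sum_pos (fun k _ => rpow_pos_of_pos (hα k) _) ⟨⟨0, hL⟩, mem_univ _⟩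
  have hn_cancel : n ^ (1 - p) * n ^ (p - 1) = 1 := by rw [← rpow_add hn]; simp
  refine ⟨fun ns hns hsum => ?_,
    fun ℓ => div_pos (mul_pos hn (rpow_pos_of_pos (hα ℓ) _)) hS, ?_, ?_⟩
  · have bound := rpow_sum_rpow_inv_le hp (fun ℓ => (hα ℓ).le) hns
    rw [hsum] at bound
    calc n ^ (1 - p) * S ^ p ≤ n ^ (1 - p) * (n ^ (p - 1) * ∑ ℓ, α ℓ * ns ℓ ^ (1 - p)) := by
          gcongr
      _ = ∑ ℓ, α ℓ * ns ℓ ^ (1 - p) := by rw [← mul_assoc, hn_cancel, one_mul]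
  · rw [← sum_div, ← mul_sum, mul_div_cancel_right₀ _ hS.ne']
  · simp only [mul_div_right_comm n]
    rw [sum_mul_rpow_one_sub_of_proportional hp0 (fun ℓ => (hα ℓ).le) (by positivity),
      div_rpow hn.le hS.le, div_mul_eq_mul_div, mul_div_assoc,
      ← rpow_one_sub' hS.le (by rwa [sub_sub_cancel]), sub_sub_cancel]
end

section
/- For L > 1, let α_ℓ > 0 for ℓ = 1,…,L sum to one and let ρ ≥ 1. If either γ_1 ≥ γ_2 ≥ ρ or 1 ≤ γ_1 ≤ γ_2 ≤ ρ, then I_0(γ_1 | ρ) ≥ I_0(γ_2 | ρ) ≥ I_0(ρ | ρ) = 1. -/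
/-! Write `F e = log ∑ ℓ, α ℓ ^ e`, convex in `e` by Hölder's inequality, and `t = 2 / (γ + 1)`.
Then `I₀(γ | ρ) = exp (g t) / exp ((ρ + 1) F (2 / (ρ + 1)))` with `g t = F (2 - ρ t) + ρ F t`.
The function `g` is convex, and since `2 / (ρ + 1)` is the mean of `2 - ρ t` and `t` with weights
`1 : ρ`, Jensen gives `g t ≥ (ρ + 1) F (2 / (ρ + 1)) = g (2 / (ρ + 1))`. A convex function is
monotone on either side of a global minimum, and `γ ↦ 2 / (γ + 1)` is decreasing. -/

open Real

/-- The inefficiency `I₀(γ ∣ ρ)` of designing with exponent `γ` when the true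
rate exponent is `ρ`. -/
noncomputable def I0 {L : ℕ} (α : Fin L → ℝ) (γ ρ : ℝ) : ℝ :=
  (∑ ℓ, (α ℓ) ^ (2 - 2 * ρ / (γ + 1))) * (∑ k, (α k) ^ (2 / (γ + 1))) ^ ρ
    / (∑ k, (α k) ^ (2 / (ρ + 1))) ^ (ρ + 1)

open Set Finset

section ConvexMinimum

variable {f : ℝ → ℝ} {x₀ : ℝ}

theorem ConvexOn.monotoneOn_Ici_of_isMinOn (hf : ConvexOn ℝ univ f) (hmin : IsMinOn f univ x₀) :
    MonotoneOn f (Ici x₀) := by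
  intro y hy z _ hyz
  rcases (mem_Ici.mp hy).eq_or_lt with rfl | hy
  · exact hmin (mem_univ z)
  · exact hf.le_right_of_left_le'' (mem_univ _) (mem_univ _) hy hyz (hmin (mem_univ y))

theorem ConvexOn.antitoneOn_Iic_of_isMinOn (hf : ConvexOn ℝ univ f) (hmin : IsMinOn f univ x₀) :
    AntitoneOn f (Iic x₀) := by
  intro y _ z hz hyz
  rcases (mem_Iic.mp hz).eq_or_lt with rfl | hz
  · exact hmin (mem_univ y)
  · exact hf.le_left_of_right_le'' (mem_univ _) (mem_univ _) hyz hz (hmin (mem_univ z))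

variable {F : ℝ → ℝ} {ρ : ℝ}

theorem ConvexOn.comp_sub_mul_add_mul (hF : ConvexOn ℝ univ F) (hρ : 0 ≤ ρ) (c : ℝ) :
    ConvexOn ℝ univ (fun t => F (c - ρ * t) + ρ * F t) :=
  (hF.comp_affineMap (AffineMap.const ℝ ℝ c - ρ • AffineMap.id ℝ ℝ)).add (hF.smul hρ)

theorem ConvexOn.isMinOn_comp_sub_mul_add_mul (hF : ConvexOn ℝ univ F) (hρ : 0 ≤ ρ) (c : ℝ) :
    IsMinOn (fun t => F (c - ρ * t) + ρ * F t) univ (c / (ρ + 1)) := by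
  intro t _
  have hρ₁ : 0 < ρ + 1 := by linarith
  have hjensen : F (c / (ρ + 1)) ≤ 1 / (ρ + 1) * F (c - ρ * t) + ρ / (ρ + 1) * F t := by
    have h := hF.2 (mem_univ (c - ρ * t)) (mem_univ t) (show 0 ≤ 1 / (ρ + 1) by positivity)
      (show 0 ≤ ρ / (ρ + 1) by positivity) (by field_simp; ring)
    simp only [smul_eq_mul] at h
    rwa [show 1 / (ρ + 1) * (c - ρ * t) + ρ / (ρ + 1) * t = c / (ρ + 1) by field_simp; ring] at h
  calc F (c - ρ * (c / (ρ + 1))) + ρ * F (c / (ρ + 1)) = (ρ + 1) * F (c / (ρ + 1)) := by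
        rw [show c - ρ * (c / (ρ + 1)) = c / (ρ + 1) by field_simp; ring]; ring
    _ ≤ (ρ + 1) * (1 / (ρ + 1) * F (c - ρ * t) + ρ / (ρ + 1) * F t) := by gcongr
    _ = F (c - ρ * t) + ρ * F t := by field_simp

end ConvexMinimum

section LogSumRpow

variable {ι : Type*} [Fintype ι] {α : ι → ℝ}

theorem sum_rpow_add_le_rpow_mul_rpow (hα : ∀ i, 0 < α i) {a b : ℝ} (ha : 0 ≤ a) (hb : 0 ≤ b)
    (hab : a + b = 1) (x y : ℝ) :
    ∑ i, α i ^ (a * x + b * y) ≤ (∑ i, α i ^ x) ^ a * (∑ i, α i ^ y) ^ b := by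
  rcases ha.eq_or_lt with rfl | ha
  · simp [show b = 1 by linarith]
  rcases hb.eq_or_lt with rfl | hb
  · simp [show a = 1 by linarith]
  calc ∑ i, α i ^ (a * x + b * y) = ∑ i, α i ^ (a * x) * α i ^ (b * y) := by
        simp only [rpow_add (hα _)]
    _ ≤ (∑ i, (α i ^ (a * x)) ^ a⁻¹) ^ (1 / a⁻¹) * (∑ i, (α i ^ (b * y)) ^ b⁻¹) ^ (1 / b⁻¹) :=
        inner_le_Lp_mul_Lq_of_nonneg univ (.inv_inv ha hb hab)
          (fun i _ => (rpow_pos_of_pos (hα i) _).le) (fun i _ => (rpow_pos_of_pos (hα i) _).le)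
    _ = (∑ i, α i ^ x) ^ a * (∑ i, α i ^ y) ^ b := by
        simp only [← rpow_mul (hα _).le, one_div, inv_inv, mul_comm a x, mul_comm b y,
          mul_inv_cancel_right₀ ha.ne', mul_inv_cancel_right₀ hb.ne']

noncomputable def logSumRpow (α : ι → ℝ) (e : ℝ) : ℝ := log (∑ i, α i ^ e)

theorem sum_rpow_pos [Nonempty ι] (hα : ∀ i, 0 < α i) (e : ℝ) : 0 < ∑ i, α i ^ e :=
  sum_pos (fun i _ => rpow_pos_of_pos (hα i) e) univ_nonempty

theorem exp_logSumRpow [Nonempty ι] (hα : ∀ i, 0 < α i) (e : ℝ) :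
    exp (logSumRpow α e) = ∑ i, α i ^ e :=
  exp_log (sum_rpow_pos hα e)

theorem convexOn_logSumRpow [Nonempty ι] (hα : ∀ i, 0 < α i) :
    ConvexOn ℝ univ (logSumRpow α) := by
  refine ⟨convex_univ, fun x _ y _ a b ha hb hab => ?_⟩
  have hpos := sum_rpow_pos hα
  calc log (∑ i, α i ^ (a • x + b • y))
      ≤ log ((∑ i, α i ^ x) ^ a * (∑ i, α i ^ y) ^ b) :=
        log_le_log (hpos _) (sum_rpow_add_le_rpow_mul_rpow hα ha hb hab x y)
    _ = a • logSumRpow α x + b • logSumRpow α y := by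
        rw [log_mul (rpow_pos_of_pos (hpos x) a).ne' (rpow_pos_of_pos (hpos y) b).ne',
          log_rpow (hpos x), log_rpow (hpos y)]
        rfl

end LogSumRpow

theorem I0_eq_exp_div {L : ℕ} [NeZero L] {α : Fin L → ℝ} (hα : ∀ ℓ, 0 < α ℓ) (γ ρ : ℝ) :
    I0 α γ ρ = exp (logSumRpow α (2 - ρ * (2 / (γ + 1))) + ρ * logSumRpow α (2 / (γ + 1)))
      / (∑ k, α k ^ (2 / (ρ + 1))) ^ (ρ + 1) := by
  rw [I0, show 2 - 2 * ρ / (γ + 1) = 2 - ρ * (2 / (γ + 1)) by ring, exp_add, exp_logSumRpow hα,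
    logSumRpow, ← log_rpow (sum_rpow_pos hα _), exp_log (rpow_pos_of_pos (sum_rpow_pos hα _) ρ)]

theorem I0_self {L : ℕ} [NeZero L] {α : Fin L → ℝ} (hα : ∀ ℓ, 0 < α ℓ) {ρ : ℝ} (hρ : 0 ≤ ρ) :
    I0 α ρ ρ = 1 := by
  have hexp : 2 - 2 * ρ / (ρ + 1) = 2 / (ρ + 1) := by field_simp; ring
  rw [I0, hexp, rpow_add_one (sum_rpow_pos hα _).ne', mul_comm (_ ^ ρ)]
  exact div_self (mul_pos (sum_rpow_pos hα _) (rpow_pos_of_pos (sum_rpow_pos hα _) ρ)).ne'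

theorem I0_le_I0_iff {L : ℕ} [NeZero L] {α : Fin L → ℝ} (hα : ∀ ℓ, 0 < α ℓ) (γ γ' ρ : ℝ) :
    I0 α γ ρ ≤ I0 α γ' ρ ↔
      logSumRpow α (2 - ρ * (2 / (γ + 1))) + ρ * logSumRpow α (2 / (γ + 1)) ≤
        logSumRpow α (2 - ρ * (2 / (γ' + 1))) + ρ * logSumRpow α (2 / (γ' + 1)) := by
  rw [I0_eq_exp_div hα, I0_eq_exp_div hα,
    div_le_div_iff_of_pos_right (rpow_pos_of_pos (sum_rpow_pos hα _) _), exp_le_exp]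

theorem I0_monotone_general
    (L : ℕ) (hL : 1 < L) (α : Fin L → ℝ) (hα : ∀ ℓ, 0 < α ℓ)
    (ρ : ℝ) (hρ : 1 ≤ ρ) (γ₁ γ₂ : ℝ)
    (hcase : (ρ ≤ γ₂ ∧ γ₂ ≤ γ₁) ∨ (1 ≤ γ₁ ∧ γ₁ ≤ γ₂ ∧ γ₂ ≤ ρ)) :
    I0 α γ₁ ρ ≥ I0 α γ₂ ρ ∧ I0 α γ₂ ρ ≥ I0 α ρ ρ ∧ I0 α ρ ρ = 1 := by
  have : NeZero L := ⟨by omega⟩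
  have hρ₀ : 0 ≤ ρ := by linarith
  have hconv := (convexOn_logSumRpow hα).comp_sub_mul_add_mul hρ₀ 2
  have hmin := (convexOn_logSumRpow hα).isMinOn_comp_sub_mul_add_mul hρ₀ 2
  have hrecip {γ γ' : ℝ} (hγ : 0 < γ + 1) (h : γ ≤ γ') : 2 / (γ' + 1) ≤ 2 / (γ + 1) :=
    div_le_div_of_nonneg_left zero_le_two hγ (by linarith)
  refine ⟨?_, (I0_le_I0_iff hα _ _ _).2 (hmin (mem_univ _)), I0_self hα hρ₀⟩
  rcases hcase with ⟨hργ₂, hγ₂₁⟩ | ⟨hγ₁, hγ₁₂, hγ₂ρ⟩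
  · refine (I0_le_I0_iff hα _ _ _).2 (hconv.antitoneOn_Iic_of_isMinOn hmin ?_ ?_ ?_)
    · exact hrecip (by linarith) (hργ₂.trans hγ₂₁)
    · exact hrecip (by linarith) hργ₂
    · exact hrecip (by linarith) hγ₂₁
  · refine (I0_le_I0_iff hα _ _ _).2 (hconv.monotoneOn_Ici_of_isMinOn hmin ?_ ?_ ?_)
    · exact hrecip (by linarith) hγ₂ρ
    · exact hrecip (by linarith) (hγ₁₂.trans hγ₂ρ)
    · exact hrecip (by linarith) hγ₁₂

theorem I0_monotone
    (L : ℕ) (hL : 1 < L) (α : Fin L → ℝ) (hα : ∀ ℓ, 0 < α ℓ)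
    (hsum : ∑ ℓ, α ℓ = 1) (ρ : ℝ) (hρ : 1 ≤ ρ) (γ₁ γ₂ : ℝ)
    (hcase : (ρ ≤ γ₂ ∧ γ₂ ≤ γ₁) ∨ (1 ≤ γ₁ ∧ γ₁ ≤ γ₂ ∧ γ₂ ≤ ρ)) :
    I0 α γ₁ ρ ≥ I0 α γ₂ ρ ∧ I0 α γ₂ ρ ≥ I0 α ρ ρ ∧ I0 α ρ ρ = 1 :=
  I0_monotone_general L hL α hα ρ hρ γ₁ γ₂ hcase
end

section
/- For L > 1, let α_ℓ > 0 for ℓ = 1,…,L sum to one. Then (Σ_{ℓ=1}^L α_ℓ^{3/2}) · (Σ_{ℓ=1}^L α_ℓ^{1/2}) ≥ (Σ_{ℓ=1}^L α_ℓ^{4/3}) · (Σ_{ℓ=1}^L α_ℓ^{2/3}) ≥ 1; equivalently, I_0(3 | 1) ≥ I_0(2 | 1) ≥ I_0(1 | 1) = 1. -/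
open Real

private lemma rpow_as_pow (a : ℝ) (ha : 0 < a) (n : ℕ) (r : ℝ) (h : (n : ℝ) * (1/6) = r) :
    a ^ r = (a ^ ((1:ℝ)/6)) ^ n := by
  rw [← Real.rpow_natCast (a ^ ((1:ℝ)/6)) n, ← Real.rpow_mul ha.le, mul_comm, h]

private lemma key1 (a b : ℝ) (ha : 0 < a) (hb : 0 < b) :
    a ^ ((4:ℝ)/3) * b ^ ((2:ℝ)/3) + a ^ ((2:ℝ)/3) * b ^ ((4:ℝ)/3)
      ≤ a ^ ((3:ℝ)/2) * b ^ ((1:ℝ)/2) + a ^ ((1:ℝ)/2) * b ^ ((3:ℝ)/2) := by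
  set x := a ^ ((1:ℝ)/6) with hx
  set y := b ^ ((1:ℝ)/6) with hy
  have hxp : 0 < x := Real.rpow_pos_of_pos ha _
  have hyp : 0 < y := Real.rpow_pos_of_pos hb _
  rw [rpow_as_pow a ha 9 ((3:ℝ)/2) (by norm_num), rpow_as_pow a ha 8 ((4:ℝ)/3) (by norm_num),
      rpow_as_pow a ha 4 ((2:ℝ)/3) (by norm_num), rpow_as_pow a ha 3 ((1:ℝ)/2) (by norm_num),
      rpow_as_pow b hb 9 ((3:ℝ)/2) (by norm_num), rpow_as_pow b hb 8 ((4:ℝ)/3) (by norm_num),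
      rpow_as_pow b hb 4 ((2:ℝ)/3) (by norm_num), rpow_as_pow b hb 3 ((1:ℝ)/2) (by norm_num)]
  nlinarith [mul_nonneg (mul_nonneg (pow_pos hxp 3).le (pow_pos hyp 3).le)
      (mul_nonneg (mul_self_nonneg (x - y)) (by positivity : (0:ℝ) ≤ x^4 + x^3*y + x^2*y^2 + x*y^3 + y^4)),
    sq_nonneg (x - y), sq_nonneg (x + y)]

private lemma key2 (a b : ℝ) (ha : 0 < a) (hb : 0 < b) :
    a * b + a * b ≤ a ^ ((4:ℝ)/3) * b ^ ((2:ℝ)/3) + a ^ ((2:ℝ)/3) * b ^ ((4:ℝ)/3) := by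
  have ha6 : a = (a ^ ((1:ℝ)/6)) ^ (6:ℕ) := by
    rw [← Real.rpow_natCast (a ^ ((1:ℝ)/6)) 6, ← Real.rpow_mul ha.le]; norm_num
  have hb6 : b = (b ^ ((1:ℝ)/6)) ^ (6:ℕ) := by
    rw [← Real.rpow_natCast (b ^ ((1:ℝ)/6)) 6, ← Real.rpow_mul hb.le]; norm_num
  rw [rpow_as_pow a ha 8 ((4:ℝ)/3) (by norm_num), rpow_as_pow a ha 4 ((2:ℝ)/3) (by norm_num),
      rpow_as_pow b hb 8 ((4:ℝ)/3) (by norm_num), rpow_as_pow b hb 4 ((2:ℝ)/3) (by norm_num)]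
  nth_rewrite 1 2 [ha6]
  nth_rewrite 1 2 [hb6]
  set x := a ^ ((1:ℝ)/6) with hx
  set y := b ^ ((1:ℝ)/6) with hy
  have hxp : 0 < x := Real.rpow_pos_of_pos ha _
  have hyp : 0 < y := Real.rpow_pos_of_pos hb _
  nlinarith [mul_nonneg (mul_nonneg (pow_pos hxp 4).le (pow_pos hyp 4).le)
      (sq_nonneg (x^2 - y^2))]

theorem I0_three_two_one_given_one
    (L : ℕ) (hL : 1 < L) (α : Fin L → ℝ) (hα : ∀ ℓ, 0 < α ℓ)
    (hsum : ∑ ℓ, α ℓ = 1) :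
    (∑ ℓ, (α ℓ) ^ ((3 : ℝ) / 2)) * (∑ ℓ, (α ℓ) ^ ((1 : ℝ) / 2))
      ≥ (∑ ℓ, (α ℓ) ^ ((4 : ℝ) / 3)) * (∑ ℓ, (α ℓ) ^ ((2 : ℝ) / 3)) ∧
    (∑ ℓ, (α ℓ) ^ ((4 : ℝ) / 3)) * (∑ ℓ, (α ℓ) ^ ((2 : ℝ) / 3)) ≥ 1 := by
  have expand : ∀ f g : Fin L → ℝ,
      (∑ i, f i) * (∑ j, g j) + (∑ i, g i) * (∑ j, f j)
        = ∑ i, ∑ j, (f i * g j + g i * f j) := by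
    intro f g
    rw [Finset.sum_mul_sum, Finset.sum_mul_sum, ← Finset.sum_add_distrib]
    exact Finset.sum_congr rfl fun i _ => (Finset.sum_add_distrib).symm
  constructor
  · have h := expand (fun i => α i ^ ((3:ℝ)/2)) (fun i => α i ^ ((1:ℝ)/2))
    have h' := expand (fun i => α i ^ ((4:ℝ)/3)) (fun i => α i ^ ((2:ℝ)/3))
    have hle : ∑ i, ∑ j, (α i ^ ((4:ℝ)/3) * α j ^ ((2:ℝ)/3) + α i ^ ((2:ℝ)/3) * α j ^ ((4:ℝ)/3))
        ≤ ∑ i, ∑ j, (α i ^ ((3:ℝ)/2) * α j ^ ((1:ℝ)/2) + α i ^ ((1:ℝ)/2) * α j ^ ((3:ℝ)/2)) :=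
      Finset.sum_le_sum fun i _ => Finset.sum_le_sum fun j _ => key1 (α i) (α j) (hα i) (hα j)
    simp only at h h'
    linarith
  · have h' := expand (fun i => α i ^ ((4:ℝ)/3)) (fun i => α i ^ ((2:ℝ)/3))
    have h0 : (1:ℝ) * 1 + 1 * 1 = ∑ i, ∑ j, (α i * α j + α i * α j) := by
      have := expand α α
      rw [hsum] at this
      exact this
    have hle : ∑ i, ∑ j, (α i * α j + α i * α j)
        ≤ ∑ i, ∑ j, (α i ^ ((4:ℝ)/3) * α j ^ ((2:ℝ)/3) + α i ^ ((2:ℝ)/3) * α j ^ ((4:ℝ)/3)) :=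
      Finset.sum_le_sum fun i _ => Finset.sum_le_sum fun j _ => key2 (α i) (α j) (hα i) (hα j)
    simp only at h'
    linarith
end

section
/- Fix integers N ≥ L ≥ 1, ρ > 0 and α_1,…,α_L > 0. Define R_0(n | ñ; τ) = (Σ_ℓ α_ℓ^2 τ_ℓ n_ℓ^{−ρ}) / (Σ_ℓ α_ℓ^2 τ_ℓ ñ_ℓ^{−ρ}). Then min_{n ∈ Δ_N} max_{ñ ∈ Δ_N} sup_{τ ∈ T} R_0(n | ñ; τ) = ((N − L + 1)/⌊N/L⌋)^{ρ}, and the minimum is attained by the near-equal allocation n* having r = N − L⌊N/L⌋ coordinates equal to ⌊N/L⌋ + 1 and the remaining coordinates equal to ⌊N/L⌋. -/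
open Real

/-- Feasible integer sample-size allocations of a total budget `N` to `L` strata. -/
def Delta (L N : ℕ) : Set (Fin L → ℕ) :=
  { nv | (∀ ℓ, 1 ≤ nv ℓ) ∧ ∑ ℓ, nv ℓ = N }

/-- The suboptimality ratio `R₀(n ∣ ñ; τ)` under the uncorrelated (ansatz 0)
variance when stratum `ℓ` has variance `τ_ℓ n_ℓ^{-ρ}`. -/
noncomputable def R0 {L : ℕ} (α : Fin L → ℝ) (ρ : ℝ)
    (nv ntv : Fin L → ℕ) (τ : Fin L → ℝ) : ℝ :=
  (∑ ℓ, (α ℓ) ^ 2 * τ ℓ * ((nv ℓ : ℝ)) ^ (-ρ)) /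
  (∑ ℓ, (α ℓ) ^ 2 * τ ℓ * ((ntv ℓ : ℝ)) ^ (-ρ))

/-- `sup_{τ ∈ T} R₀(n ∣ ñ; τ)`. -/
noncomputable def supTau0 {L : ℕ} (α : Fin L → ℝ) (ρ : ℝ) (nv ntv : Fin L → ℕ) : ℝ :=
  sSup { r : ℝ | ∃ τ : Fin L → ℝ, (∀ ℓ, 0 ≤ τ ℓ) ∧ (∃ ℓ, 0 < τ ℓ) ∧ r = R0 α ρ nv ntv τ }

/-- `max_{ñ ∈ Δ_N} sup_{τ ∈ T} R₀(n ∣ ñ; τ)`. -/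
noncomputable def worst0 {L : ℕ} (N : ℕ) (α : Fin L → ℝ) (ρ : ℝ) (nv : Fin L → ℕ) : ℝ :=
  sSup { w : ℝ | ∃ ntv ∈ Delta L N, w = supTau0 α ρ nv ntv }

/-!
Putting all of `τ` on one stratum shows that `sup_τ R₀(n ∣ ñ; τ) = max_ℓ (ñ_ℓ / n_ℓ)^ρ`: in general
`R₀` is an average of these ratios weighted by `α_ℓ² τ_ℓ ñ_ℓ^{-ρ}`. Since every `ñ_ℓ ≤ N - L + 1`,
the adversary does best by putting all `N - L` spare units on a smallest stratum of `n`, so the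
worst case for `n` is `((N - L + 1) / min_ℓ n_ℓ)^ρ`. Hence the best allocation maximises `min_ℓ n_ℓ`,
which is at most `⌊N / L⌋`, with equality for the near-equal allocation.
-/

theorem Finset.sum_mul_div_sum_le {ι : Type*} {s : Finset ι} {w f : ι → ℝ} {M : ℝ}
    (hw : ∀ i ∈ s, 0 ≤ w i) (hpos : 0 < ∑ i ∈ s, w i) (hf : ∀ i ∈ s, f i ≤ M) :
    (∑ i ∈ s, f i * w i) / ∑ i ∈ s, w i ≤ M := by
  rw [div_le_iff₀ hpos, Finset.mul_sum]
  exact Finset.sum_le_sum fun i hi => mul_le_mul_of_nonneg_right (hf i hi) (hw i hi)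

theorem Real.rpow_neg_eq_div_rpow_mul_rpow_neg (ρ : ℝ) {a b : ℝ} (ha : 0 ≤ a) (hb : 0 < b) :
    a ^ (-ρ) = (b / a) ^ ρ * b ^ (-ρ) := by
  rw [div_rpow hb.le ha, rpow_neg hb.le, rpow_neg ha, div_mul_eq_mul_div, mul_inv_cancel₀
    (rpow_pos_of_pos hb ρ).ne', one_div]

section R0

variable {L : ℕ} (α : Fin L → ℝ) (ρ : ℝ) (nv ntv : Fin L → ℕ)

theorem R0_single {ℓ₀ : Fin L} (hα : α ℓ₀ ≠ 0) :
    R0 α ρ nv ntv (Pi.single ℓ₀ 1) = ((ntv ℓ₀ : ℝ) / nv ℓ₀) ^ ρ := by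
  simp only [R0, Pi.single_apply, mul_ite, ite_mul, mul_one, mul_zero, zero_mul,
    Finset.sum_ite_eq', Finset.mem_univ, if_true]
  rw [mul_div_mul_left _ _ (pow_ne_zero 2 hα), rpow_neg (Nat.cast_nonneg _),
    rpow_neg (Nat.cast_nonneg _), inv_div_inv, div_rpow (Nat.cast_nonneg _) (Nat.cast_nonneg _)]

theorem R0_le_sup' [Nonempty (Fin L)] (hα : ∀ ℓ, α ℓ ≠ 0) (hntv : ∀ ℓ, 0 < ntv ℓ)
    {τ : Fin L → ℝ} (hτ : ∀ ℓ, 0 ≤ τ ℓ) (hτpos : ∃ ℓ, 0 < τ ℓ) :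
    R0 α ρ nv ntv τ ≤ Finset.univ.sup' Finset.univ_nonempty
      fun ℓ => ((ntv ℓ : ℝ) / nv ℓ) ^ ρ := by
  have hntv' (ℓ : Fin L) : (0 : ℝ) < ntv ℓ := Nat.cast_pos.mpr (hntv ℓ)
  have hweight (ℓ : Fin L) : 0 ≤ α ℓ ^ 2 * τ ℓ * (ntv ℓ : ℝ) ^ (-ρ) := by
    have := hτ ℓ
    positivity
  obtain ⟨ℓ₁, hℓ₁⟩ := hτpos
  have hden : 0 < ∑ ℓ, α ℓ ^ 2 * τ ℓ * (ntv ℓ : ℝ) ^ (-ρ) := by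
    refine Finset.sum_pos' (fun ℓ _ => hweight ℓ) ⟨ℓ₁, Finset.mem_univ _, ?_⟩
    have := hntv ℓ₁
    have := hα ℓ₁
    positivity
  have hnum : ∑ ℓ, α ℓ ^ 2 * τ ℓ * (nv ℓ : ℝ) ^ (-ρ) =
      ∑ ℓ, ((ntv ℓ : ℝ) / nv ℓ) ^ ρ * (α ℓ ^ 2 * τ ℓ * (ntv ℓ : ℝ) ^ (-ρ)) := by
    refine Finset.sum_congr rfl fun ℓ _ => ?_
    rw [rpow_neg_eq_div_rpow_mul_rpow_neg ρ (Nat.cast_nonneg _) (hntv' ℓ)]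
    ring
  rw [R0, hnum]
  exact Finset.sum_mul_div_sum_le (fun ℓ _ => hweight ℓ) hden
    fun ℓ _ => Finset.le_sup' (fun ℓ => ((ntv ℓ : ℝ) / nv ℓ) ^ ρ) (Finset.mem_univ ℓ)

theorem supTau0_eq_sup' [Nonempty (Fin L)] (hα : ∀ ℓ, α ℓ ≠ 0) (hntv : ∀ ℓ, 0 < ntv ℓ) :
    supTau0 α ρ nv ntv = Finset.univ.sup' Finset.univ_nonempty
      fun ℓ => ((ntv ℓ : ℝ) / nv ℓ) ^ ρ := by
  refine IsGreatest.csSup_eq ⟨?_, ?_⟩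
  · obtain ⟨ℓ₀, -, hℓ₀⟩ :=
      Finset.exists_mem_eq_sup' Finset.univ_nonempty fun ℓ => ((ntv ℓ : ℝ) / nv ℓ) ^ ρ
    refine ⟨Pi.single ℓ₀ 1, fun ℓ => ?_, ⟨ℓ₀, by simp⟩,
      by rw [hℓ₀, R0_single α ρ nv ntv (hα ℓ₀)]⟩
    by_cases h : ℓ = ℓ₀ <;> simp [h]
  · rintro r ⟨τ, hτ, hτpos, rfl⟩
    exact R0_le_sup' α ρ nv ntv hα hntv hτ hτpos

end R0

section Delta

variable {L N : ℕ} {nv : Fin L → ℕ}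

theorem apply_le_of_mem_Delta (h : nv ∈ Delta L N) (ℓ : Fin L) : nv ℓ ≤ N - L + 1 := by
  have hrest : L - 1 ≤ ∑ j ∈ Finset.univ.erase ℓ, nv j := by
    simpa [Finset.card_erase_of_mem] using
      Finset.card_nsmul_le_sum (Finset.univ.erase ℓ) nv 1 fun j _ => h.1 j
  have := Finset.add_sum_erase Finset.univ nv (Finset.mem_univ ℓ)
  have := h.2
  omega

theorem inf'_le_div_of_mem_Delta [Nonempty (Fin L)] (h : nv ∈ Delta L N) :
    Finset.univ.inf' Finset.univ_nonempty nv ≤ N / L := by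
  have hsum := Finset.card_nsmul_le_sum Finset.univ nv (Finset.univ.inf' Finset.univ_nonempty nv)
    fun ℓ _ => Finset.inf'_le nv (Finset.mem_univ ℓ)
  rw [Finset.card_univ, Fintype.card_fin, smul_eq_mul, h.2] at hsum
  exact (Nat.le_div_iff_mul_le Fin.pos').mpr (by rwa [mul_comm])

theorem one_add_single_mem_Delta (hLN : L ≤ N) (ℓ₀ : Fin L) :
    1 + Pi.single ℓ₀ (N - L) ∈ Delta L N := by
  refine ⟨fun ℓ => by simp, ?_⟩
  simp only [Pi.add_apply, Pi.one_apply, Finset.sum_add_distrib, Finset.sum_const,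
    Finset.card_univ, Fintype.card_fin, smul_eq_mul, mul_one, Finset.sum_pi_single',
    Finset.mem_univ, if_true]
  omega

end Delta

theorem worst0_eq {L N : ℕ} [Nonempty (Fin L)] (hLN : L ≤ N) {α : Fin L → ℝ}
    (hα : ∀ ℓ, α ℓ ≠ 0) {ρ : ℝ} (hρ : 0 ≤ ρ) {nv : Fin L → ℕ} (hnv : nv ∈ Delta L N) :
    worst0 N α ρ nv =
      (((N - L + 1 : ℕ) : ℝ) / (Finset.univ.inf' Finset.univ_nonempty nv : ℕ)) ^ ρ := by
  obtain ⟨ℓ₀, -, hℓ₀⟩ := Finset.exists_mem_eq_inf' Finset.univ_nonempty nv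
  rw [hℓ₀]
  have hbound : ∀ ntv ∈ Delta L N,
      supTau0 α ρ nv ntv ≤ (((N - L + 1 : ℕ) : ℝ) / nv ℓ₀) ^ ρ := by
    intro ntv hntv
    rw [supTau0_eq_sup' α ρ nv ntv hα hntv.1]
    refine Finset.sup'_le _ _ fun ℓ _ => rpow_le_rpow (by positivity) ?_ hρ
    exact div_le_div₀ (Nat.cast_nonneg _) (Nat.cast_le.mpr (apply_le_of_mem_Delta hntv ℓ))
      (Nat.cast_pos.mpr (hnv.1 ℓ₀)) (Nat.cast_le.mpr (hℓ₀ ▸ Finset.inf'_le nv (Finset.mem_univ ℓ)))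
  have hconc := one_add_single_mem_Delta hLN ℓ₀
  have hattained : (((N - L + 1 : ℕ) : ℝ) / nv ℓ₀) ^ ρ ≤
      supTau0 α ρ nv (1 + Pi.single ℓ₀ (N - L)) := by
    rw [supTau0_eq_sup' α ρ nv _ hα hconc.1]
    refine le_of_eq_of_le ?_ (Finset.le_sup' _ (Finset.mem_univ ℓ₀))
    simp [add_comm]
  refine IsGreatest.csSup_eq ⟨⟨_, hconc, hattained.antisymm (hbound _ hconc)⟩, ?_⟩
  rintro _ ⟨ntv, hntv, rfl⟩
  exact hbound ntv hntv

def nearEqual (L N : ℕ) : Fin L → ℕ :=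
  fun ℓ => if (ℓ : ℕ) < N - L * (N / L) then N / L + 1 else N / L

theorem nearEqual_mem_Delta {L N : ℕ} (hL : 0 < L) (hLN : L ≤ N) : nearEqual L N ∈ Delta L N := by
  have hq : 1 ≤ N / L := (Nat.one_le_div_iff hL).mpr hLN
  have hr : N - L * (N / L) < L := by
    have := Nat.mod_add_div N L
    have := Nat.mod_lt N hL
    omega
  refine ⟨fun ℓ => by unfold nearEqual; split_ifs <;> omega, ?_⟩
  calc ∑ ℓ, nearEqual L N ℓ
        = ∑ ℓ : Fin L, (N / L + if (ℓ : ℕ) < N - L * (N / L) then 1 else 0) :=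
        Finset.sum_congr rfl fun ℓ _ => by unfold nearEqual; split_ifs <;> rfl
    _ = N := by
      rw [Finset.sum_add_distrib, Finset.sum_const, Finset.card_univ, Fintype.card_fin,
        smul_eq_mul, Finset.sum_boole, Fin.card_filter_val_lt, Nat.cast_id, min_eq_right hr.le]
      have := Nat.mod_add_div N L
      omega

theorem inf'_nearEqual {L N : ℕ} [Nonempty (Fin L)] :
    Finset.univ.inf' Finset.univ_nonempty (nearEqual L N) = N / L := by
  have hL : 0 < L := Fin.pos'
  refine le_antisymm ?_ (Finset.le_inf' _ _ fun ℓ _ => by unfold nearEqual; split_ifs <;> omega)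
  have hlast : nearEqual L N ⟨L - 1, by omega⟩ = N / L := by
    have := Nat.mod_add_div N L
    have := Nat.mod_lt N hL
    simp only [nearEqual, ite_eq_right_iff]
    omega
  exact hlast ▸ Finset.inf'_le _ (Finset.mem_univ _)

theorem minimax_R0
    (L N : ℕ) (hL : 0 < L) (hLN : L ≤ N)
    (α : Fin L → ℝ) (hα : ∀ ℓ, 0 < α ℓ) (ρ : ℝ) (hρ : 0 < ρ) :
    IsLeast { v : ℝ | ∃ nv ∈ Delta L N, v = worst0 N α ρ nv }
      ((((N - L + 1 : ℕ) : ℝ) / ((N / L : ℕ) : ℝ)) ^ ρ) ∧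
    (let nstar : Fin L → ℕ := fun ℓ => if (ℓ : ℕ) < N - L * (N / L) then N / L + 1 else N / L
     nstar ∈ Delta L N ∧
      worst0 N α ρ nstar = (((N - L + 1 : ℕ) : ℝ) / ((N / L : ℕ) : ℝ)) ^ ρ) := by
  have : Nonempty (Fin L) := Fin.pos_iff_nonempty.mp hL
  have hα' : ∀ ℓ, α ℓ ≠ 0 := fun ℓ => (hα ℓ).ne'
  have hmem := nearEqual_mem_Delta hL hLN
  have hworst : worst0 N α ρ (nearEqual L N) = (((N - L + 1 : ℕ) : ℝ) / ((N / L : ℕ) : ℝ)) ^ ρ := by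
    rw [worst0_eq hLN hα' hρ.le hmem, inf'_nearEqual]
  refine ⟨⟨⟨_, hmem, hworst.symm⟩, ?_⟩, hmem, hworst⟩
  rintro _ ⟨nv, hnv, rfl⟩
  rw [worst0_eq hLN hα' hρ.le hnv]
  have hm : (0 : ℝ) < Finset.univ.inf' Finset.univ_nonempty nv :=
    Nat.cast_pos.mpr (Finset.le_inf' _ _ fun ℓ _ => hnv.1 ℓ)
  gcongr
  exact inf'_le_div_of_mem_Delta hnv
end
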